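/- Let N be a finite set of n input variables, let v : 2^N → ℝ be a reward function, and let γ : 2^N → ℝ be an arbitrary family of parameters. Define u^AND(T) = 0.5·v(T) + γ(T) and u^OR(T) = 0.5·v(T) − γ(T) for every T ⊆ N, and set I^AND_S = Σ_{T ⊆ S} (−1)^{|S|−|T|} u^AND(T) and I^OR_S = −Σ_{T ⊆ S} (−1)^{|S|−|T|} u^OR(N\T) for every S ⊆ N. Then for every T ⊆ N one has the universal matching property v(T) = v(∅) + Σ_{S ⊆ T, S ≠ ∅} I^AND_S + Σ_{S ⊆ N, S ∩ T ≠ ∅} I^OR_S. -/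

import Mathlib

/-!
Both interaction families are Möbius transforms on the Boolean lattice of subsets, so summing
`IAND` over all `S ⊆ T` recovers `uAND T`, and summing `IOR` over all `S ⊆ A` recovers
`-uOR (N \ A)`. The sets meeting `T` are exactly those outside the powerset of `N \ T`, hence
the AND sum is `uAND T - uAND ∅` and the OR sum is `uOR T - uOR ∅`; these add up to
`v T - v ∅` because `uAND + uOR = v`.
-/

open Finset

namespace Finset

variable {ι R : Type*} [DecidableEq ι] [Ring R]

theorem sum_Icc_neg_one_pow_card_sub {T A : Finset ι} (hTA : T ⊆ A) :
    ∑ S ∈ Icc T A, (-1 : R) ^ (#S - #T) = if T = A then 1 else 0 := by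
  rw [Icc_eq_image_powerset hTA, sum_image fun X hX Y hY h => ?_]
  · have hcard : ∀ X ∈ (A \ T).powerset, #(T ∪ X) - #T = #X := fun X hX => by
      rw [card_union_of_disjoint (disjoint_of_subset_right (mem_powerset.1 hX) disjoint_sdiff)]
      omega
    rw [sum_congr rfl fun X hX => congrArg _ (hcard X hX)]
    have hsign := congrArg (Int.cast : ℤ → R) (sum_powerset_neg_one_pow_card (x := A \ T))
    push_cast at hsign
    rw [hsign]
    exact if_congr (sdiff_eq_empty_iff_subset.trans ⟨hTA.antisymm, fun h => h ▸ subset_rfl⟩) rfl rfl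
  · have hdisj : ∀ Z ∈ (A \ T).powerset, Disjoint T Z := fun Z hZ =>
      disjoint_of_subset_right (mem_powerset.1 hZ) disjoint_sdiff
    rw [← union_sdiff_cancel_left (hdisj X hX), h, union_sdiff_cancel_left (hdisj Y hY)]

theorem sum_powerset_sum_powerset_neg_one_pow_mul (u : Finset ι → R) (A : Finset ι) :
    ∑ S ∈ A.powerset, ∑ T ∈ S.powerset, (-1 : R) ^ (#S - #T) * u T = u A := by
  rw [sum_comm' (t' := A.powerset) (s' := fun T => Icc T A) fun S T => by
    simp only [mem_powerset, mem_Icc]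
    exact ⟨fun h => ⟨⟨h.2, h.1⟩, h.2.trans h.1⟩, fun h => ⟨h.1.2, h.1.1⟩⟩]
  rw [sum_congr rfl fun T hT => by
    rw [← sum_mul, sum_Icc_neg_one_pow_card_sub (mem_powerset.1 hT), ite_mul, one_mul, zero_mul]]
  exact (sum_ite_eq' _ _ _).trans (if_pos (mem_powerset_self A))

theorem sum_filter_inter_nonempty_eq_sub [Fintype ι] {M : Type*} [AddCommGroup M]
    (f : Finset ι → M) (T : Finset ι) :
    ∑ S with (S ∩ T).Nonempty, f S = ∑ S, f S - ∑ S ∈ (univ \ T).powerset, f S := by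
  have hfilter : ({S | (S ∩ T).Nonempty} : Finset (Finset ι)) = univ \ (univ \ T).powerset := by
    ext S
    simp [subset_sdiff, not_disjoint_iff_nonempty_inter]
  rw [hfilter, sum_sdiff_eq_sub (subset_univ _)]

end Finset

/-- **Theorem 1 (universal matching property).**
Let `N` be a finite set of input variables (modeled as `Finset.univ` over a fintype `ι`),
`v` a reward function on subsets, and `γ` an arbitrary family of parameters.
Define `uAND T = 0.5 • v T + γ T`, `uOR T = 0.5 • v T - γ T`,
`IAND S = ∑_{T ⊆ S} (-1)^{|S|-|T|} uAND T`, and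
`IOR S = -∑_{T ⊆ S} (-1)^{|S|-|T|} uOR (N \ T)`.
Then for every `T ⊆ N`,
`v T = v ∅ + ∑_{∅ ≠ S ⊆ T} IAND S + ∑_{S ⊆ N, S ∩ T ≠ ∅} IOR S`. -/
theorem universal_matching_AND_OR {ι : Type*} [Fintype ι] [DecidableEq ι]
    (v γ uAND uOR IAND IOR : Finset ι → ℝ)
    (huAND : ∀ T : Finset ι, uAND T = 0.5 * v T + γ T)
    (huOR : ∀ T : Finset ι, uOR T = 0.5 * v T - γ T)
    (hIAND : ∀ S : Finset ι,
      IAND S = ∑ T ∈ S.powerset, (-1 : ℝ) ^ (S.card - T.card) * uAND T)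
    (hIOR : ∀ S : Finset ι,
      IOR S = -∑ T ∈ S.powerset, (-1 : ℝ) ^ (S.card - T.card) * uOR (Finset.univ \ T))
    (T : Finset ι) :
    v T = v ∅
      + (∑ S ∈ T.powerset.filter (fun S => S ≠ ∅), IAND S)
      + (∑ S ∈ (Finset.univ : Finset (Finset ι)).filter (fun S => (S ∩ T).Nonempty),
          IOR S) := by
  have hsumAND (A : Finset ι) : ∑ S ∈ A.powerset, IAND S = uAND A := by
    simp only [hIAND, sum_powerset_sum_powerset_neg_one_pow_mul]
  have hsumOR (A : Finset ι) : ∑ S ∈ A.powerset, IOR S = -uOR (univ \ A) := by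
    simp only [hIOR, sum_neg_distrib,
      sum_powerset_sum_powerset_neg_one_pow_mul (fun T => uOR (univ \ T))]
  have hAND : ∑ S ∈ T.powerset.filter (· ≠ ∅), IAND S = uAND T - uAND ∅ := by
    rw [filter_ne', sum_erase_eq_sub (empty_mem_powerset T), hsumAND, ← hsumAND ∅, powerset_empty,
      sum_singleton]
  have hOR : ∑ S with (S ∩ T).Nonempty, IOR S = uOR T - uOR ∅ := by
    rw [sum_filter_inter_nonempty_eq_sub, ← powerset_univ, hsumOR, hsumOR, sdiff_self, bot_eq_empty,
      sdiff_sdiff_right_self, inf_eq_inter, univ_inter]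
    ring
  rw [hAND, hOR, huAND, huAND, huOR, huOR]
  ring
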